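/- The finite epi topology on a small topos is subcanonical: every representable presheaf is a sheaf for the Grothendieck topology whose covering families of an object E are the finite families (C_i → E) such that the induced map ∐_i C_i → E is an epimorphism. -/
import Mathlib


open CategoryTheory CategoryTheory.Limits

universe u

/-- `t : ⊤_ E ⟶ Ω` is a subobject classifier. -/
structure IsClassifier {E : Type u} [Category.{u} E] [HasTerminal E]
    (Ω : E) (t : ⊤_ E ⟶ Ω) : Prop where
  mono : Mono t
  classify : ∀ {S X : E} (m : S ⟶ X), Mono m →
    ∃! χ : X ⟶ Ω, IsPullback m (terminal.from S) χ t

section Aux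

variable {B : Type u} [SmallCategory B] [HasFiniteLimits B] [HasFiniteColimits B]

/-- From a classifier: if a morphism `f` factors through a mono `m'`, then the
equalizer of the cokernel pair of `f` also factors through `m'`. -/
lemma aux_image_min {Ω : B} {t : ⊤_ B ⟶ Ω} (hΩ : IsClassifier Ω t)
    {A P M : B} (f : A ⟶ P) (m' : M ⟶ P) [Mono m'] (r : A ⟶ M) (hr : r ≫ m' = f) :
    ∃ s : equalizer (pushout.inl f f) (pushout.inr f f) ⟶ M,
      s ≫ m' = equalizer.ι (pushout.inl f f) (pushout.inr f f) := by
  obtain ⟨χ, hpb, -⟩ := hΩ.classify m' inferInstance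
  set ι := equalizer.ι (pushout.inl f f) (pushout.inr f f) with hι
  have hfχ : f ≫ χ = f ≫ (terminal.from P ≫ t) := by
    calc f ≫ χ = r ≫ m' ≫ χ := by rw [← hr, Category.assoc]
      _ = r ≫ terminal.from M ≫ t := by rw [hpb.w]
      _ = (r ≫ terminal.from M) ≫ t := (Category.assoc _ _ _).symm
      _ = terminal.from A ≫ t := by rw [terminal.comp_from]
      _ = (f ≫ terminal.from P) ≫ t := by rw [terminal.comp_from]
      _ = f ≫ terminal.from P ≫ t := Category.assoc _ _ _
  let w : pushout f f ⟶ Ω := pushout.desc χ (terminal.from P ≫ t) hfχ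
  have hιχ : ι ≫ χ = terminal.from _ ≫ t := by
    have h1 : ι ≫ χ = ι ≫ pushout.inl f f ≫ w := by
      rw [pushout.inl_desc]
    have h2 : ι ≫ pushout.inl f f ≫ w = ι ≫ pushout.inr f f ≫ w := by
      rw [← Category.assoc, equalizer.condition, Category.assoc]
    have h3 : ι ≫ pushout.inr f f ≫ w = ι ≫ (terminal.from P ≫ t) := by
      rw [pushout.inr_desc]
    rw [h1, h2, h3, ← Category.assoc, terminal.comp_from]
  exact ⟨hpb.lift ι (terminal.from _) hιχ, hpb.lift_fst _ _ _⟩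

/-- From a classifier: mono + epi implies iso. -/
lemma aux_balanced {Ω : B} {t : ⊤_ B ⟶ Ω} (hΩ : IsClassifier Ω t)
    {G X : B} (π : G ⟶ X) (hm : Mono π) (he : Epi π) : IsIso π := by
  obtain ⟨χ, hpb, -⟩ := hΩ.classify π hm
  have h1 : π ≫ χ = π ≫ (terminal.from X ≫ t) := by
    rw [hpb.w, ← Category.assoc, terminal.comp_from]
  have h2 : χ = terminal.from X ≫ t := by
    rwa [cancel_epi π] at h1
  have h3 : (𝟙 X) ≫ χ = terminal.from X ≫ t := by
    rw [Category.id_comp, h2]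
  refine ⟨hpb.lift (𝟙 X) (terminal.from X) h3, ?_, hpb.lift_fst _ _ _⟩
  have := hpb.lift_fst (𝟙 X) (terminal.from X) h3
  rw [← cancel_mono π, Category.assoc, this, Category.comp_id, Category.id_comp]

end Aux

/-- the finite epi topology on a small topos `B` — the
Grothendieck topology whose covering sieves are those containing a finite
family `(g i : C i ⟶ X)` with `∐ C i ⟶ X` epic — is subcanonical: every
representable presheaf is a sheaf. -/
theorem finite_epi_topology_subcanonical
    {B : Type u} [SmallCategory B] [HasFiniteLimits B] [HasFiniteColimits B]
    (Ω : B) (t : ⊤_ B ⟶ Ω) (hΩ : IsClassifier Ω t)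
    (J : GrothendieckTopology B)
    (hJ : ∀ (X : B) (S : Sieve X), S ∈ J X ↔
      ∃ (n : ℕ) (C : Fin n → B) (g : ∀ i, C i ⟶ X),
        (∀ i, S (g i)) ∧ Epi (Sigma.desc g)) :
    J.Subcanonical := by
  -- "local equality implies equality" for the topology J
  have hloceq : ∀ {Z T : B} (r s : Z ⟶ T) (R : Sieve Z), R ∈ J Z →
      (∀ ⦃Y⦄ (u : Y ⟶ Z), R u → u ≫ r = u ≫ s) → r = s := by
    intro Z T r s R hR hu
    obtain ⟨m, D, d, hd, hde⟩ := (hJ Z R).1 hR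
    have h1 : Sigma.desc d ≫ r = Sigma.desc d ≫ s := by
      refine Sigma.hom_ext _ _ fun j => ?_
      rw [← Category.assoc, Sigma.ι_desc, ← Category.assoc, Sigma.ι_desc]
      exact hu (d j) (hd j)
    haveI := hde
    exact (cancel_epi (Sigma.desc d)).1 h1
  -- any epi generates a covering sieve
  have hsingleton : ∀ {A' B' : B} (p : A' ⟶ B'), Epi p →
      Sieve.generate (Presieve.singleton p) ∈ J B' := by
    intro A' B' p hp
    refine (hJ _ _).2 ⟨1, fun _ => A', fun _ => p,
      fun _ => ⟨A', 𝟙 _, p, Presieve.singleton.mk, Category.id_comp _⟩, ?_⟩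
    have h0 : Sigma.ι (fun _ : Fin 1 => A') 0 ≫ Sigma.desc (fun _ => p) = p :=
      Sigma.ι_desc _ _
    have : Epi (Sigma.ι (fun _ : Fin 1 => A') 0 ≫ Sigma.desc fun _ => p) := by
      rw [h0]; exact hp
    exact epi_of_epi (Sigma.ι (fun _ : Fin 1 => A') 0) _
  apply GrothendieckTopology.Subcanonical.of_isSheaf_yoneda_obj
  intro W X S hS x hx
  obtain ⟨n, C, g, hg, hepi⟩ := (hJ X S).1 hS
  -- the coproduct, the epi e, and the glued map h
  let e : ∐ C ⟶ X := Sigma.desc g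
  let h : ∐ C ⟶ W := Sigma.desc fun i => x (g i) (hg i)
  have hepi' : Epi e := hepi
  -- the injections form a covering family of the coproduct
  have hdesc_inj : Sigma.desc (fun i => Sigma.ι C i) = 𝟙 (∐ C) :=
    Sigma.hom_ext _ _ fun i => by rw [Sigma.ι_desc, Category.comp_id]
  have hinj : Sieve.generate (Presieve.ofArrows C fun i => Sigma.ι C i) ∈ J (∐ C) := by
    refine (hJ _ _).2 ⟨n, C, fun i => Sigma.ι C i,
      fun i => ⟨C i, 𝟙 _, Sigma.ι C i, ⟨i⟩, Category.id_comp _⟩, ?_⟩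
    rw [hdesc_inj]; infer_instance
  -- the family of g's generates a covering sieve
  have hfam : Sieve.generate (Presieve.ofArrows C g) ∈ J X :=
    (hJ _ _).2 ⟨n, C, g, fun i => ⟨C i, 𝟙 _, g i, ⟨i⟩, Category.id_comp _⟩, hepi⟩
  -- Step 1: h is compatible with the kernel pair of e (locally, using hinj)
  have step1 : ∀ {Z : B} (z₁ z₂ : Z ⟶ ∐ C), z₁ ≫ e = z₂ ≫ e → z₁ ≫ h = z₂ ≫ h := by
    intro Z z₁ z₂ hz
    refine hloceq _ _ _ (J.pullback_stable z₁ hinj) ?_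
    rintro Y u ⟨Y₁, l₁, m₁, hm₁, hl₁⟩
    cases hm₁ with
    | mk i =>
      refine hloceq _ _ _ (J.pullback_stable (u ≫ z₂) hinj) ?_
      rintro V v ⟨Y₂, l₂, m₂, hm₂, hl₂⟩
      cases hm₂ with
      | mk j =>
        -- hl₁ : l₁ ≫ Sigma.ι C i = u ≫ z₁ ; hl₂ : l₂ ≫ Sigma.ι C j = v ≫ (u ≫ z₂)
        have hgi : Sigma.ι C i ≫ e = g i := Sigma.ι_desc _ _
        have hgj : Sigma.ι C j ≫ e = g j := Sigma.ι_desc _ _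
        have hcomp : (v ≫ l₁) ≫ g i = l₂ ≫ g j := by
          calc (v ≫ l₁) ≫ g i = (v ≫ l₁) ≫ Sigma.ι C i ≫ e := by rw [hgi]
            _ = (v ≫ (l₁ ≫ Sigma.ι C i)) ≫ e := by simp only [Category.assoc]
            _ = (v ≫ (u ≫ z₁)) ≫ e := by rw [hl₁]
            _ = (v ≫ u) ≫ z₁ ≫ e := by simp only [Category.assoc]
            _ = (v ≫ u) ≫ z₂ ≫ e := by rw [hz]
            _ = (v ≫ (u ≫ z₂)) ≫ e := by simp only [Category.assoc]
            _ = (l₂ ≫ Sigma.ι C j) ≫ e := by rw [hl₂]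
            _ = l₂ ≫ g j := by rw [Category.assoc, hgj]
        have hxeq : (v ≫ l₁) ≫ x (g i) (hg i) = l₂ ≫ x (g j) (hg j) := by
          have := hx (v ≫ l₁) l₂ (hg i) (hg j) hcomp
          simpa using this
        have w1 : Sigma.ι C i ≫ h = x (g i) (hg i) := Sigma.ι_desc _ _
        have w2 : Sigma.ι C j ≫ h = x (g j) (hg j) := Sigma.ι_desc _ _
        calc v ≫ u ≫ z₁ ≫ h = ((v ≫ l₁) ≫ Sigma.ι C i) ≫ h := by
              rw [Category.assoc v l₁ _, hl₁]; simp only [Category.assoc]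
          _ = (v ≫ l₁) ≫ x (g i) (hg i) := by rw [Category.assoc, w1]
          _ = l₂ ≫ x (g j) (hg j) := hxeq
          _ = (l₂ ≫ Sigma.ι C j) ≫ h := by rw [Category.assoc, w2]
          _ = v ≫ u ≫ z₂ ≫ h := by rw [hl₂]; simp only [Category.assoc]
  -- the image construction
  let f : ∐ C ⟶ X ⨯ W := prod.lift e h
  let G := equalizer (pushout.inl f f) (pushout.inr f f)
  let ι : G ⟶ X ⨯ W := equalizer.ι _ _
  let q : ∐ C ⟶ G := equalizer.lift f pushout.condition
  have hqι : q ≫ ι = f := equalizer.lift_ι _ _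
  let π : G ⟶ X := ι ≫ prod.fst
  let ω : G ⟶ W := ι ≫ prod.snd
  have hqπ : q ≫ π = e := by
    show q ≫ ι ≫ prod.fst = e
    rw [← Category.assoc, hqι]; exact prod.lift_fst _ _
  have hqω : q ≫ ω = h := by
    show q ≫ ι ≫ prod.snd = h
    rw [← Category.assoc, hqι]; exact prod.lift_snd _ _
  have hπepi : Epi π := by
    have : Epi (q ≫ π) := by rw [hqπ]; exact hepi'
    exact epi_of_epi q π
  -- q is an epi, via the classifier (all monos are regular)
  have hqepi : Epi q := by
    constructor
    intro T a b hab
    have hmono : Mono (equalizer.ι a b ≫ ι) := mono_comp _ _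
    have hrf : equalizer.lift q hab ≫ (equalizer.ι a b ≫ ι) = f := by
      rw [← Category.assoc, equalizer.lift_ι, hqι]
    obtain ⟨s, hs⟩ := aux_image_min hΩ f (equalizer.ι a b ≫ ι) (equalizer.lift q hab) hrf
    have hs2 : s ≫ equalizer.ι a b = 𝟙 G := by
      have : (s ≫ equalizer.ι a b) ≫ ι = 𝟙 G ≫ ι := by
        rw [Category.assoc]
        show s ≫ equalizer.ι a b ≫ ι = 𝟙 G ≫ ι
        rw [hs, Category.id_comp]
      exact Mono.right_cancellation _ _ this
    calc a = (s ≫ equalizer.ι a b) ≫ a := by rw [hs2, Category.id_comp]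
      _ = s ≫ equalizer.ι a b ≫ a := Category.assoc _ _ _
      _ = s ≫ equalizer.ι a b ≫ b := by rw [equalizer.condition]
      _ = (s ≫ equalizer.ι a b) ≫ b := (Category.assoc _ _ _).symm
      _ = b := by rw [hs2, Category.id_comp]
  -- the covering sieve generated by q
  have hqcov : Sieve.generate (Presieve.singleton q) ∈ J G := hsingleton q hqepi
  -- Step 2: π is mono
  have hπmono : Mono π := by
    constructor
    intro Z a b hab
    have hω : a ≫ ω = b ≫ ω := by
      refine hloceq _ _ _ (J.pullback_stable a hqcov) ?_
      rintro Y u ⟨Y₁, α, m₁, hm₁, hα⟩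
      cases hm₁
      refine hloceq _ _ _ (J.pullback_stable (u ≫ b) hqcov) ?_
      rintro V v ⟨Y₂, β, m₂, hm₂, hβ⟩
      cases hm₂
      -- hα : α ≫ q = u ≫ a ; hβ : β ≫ q = v ≫ (u ≫ b)
      have hE : (v ≫ α) ≫ e = β ≫ e := by
        calc (v ≫ α) ≫ e = (v ≫ α) ≫ q ≫ π := by rw [hqπ]
          _ = (v ≫ (α ≫ q)) ≫ π := by simp only [Category.assoc]
          _ = (v ≫ (u ≫ a)) ≫ π := by rw [hα]
          _ = (v ≫ u) ≫ a ≫ π := by simp only [Category.assoc]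
          _ = (v ≫ u) ≫ b ≫ π := by rw [hab]
          _ = (v ≫ (u ≫ b)) ≫ π := by simp only [Category.assoc]
          _ = (β ≫ q) ≫ π := by rw [hβ]
          _ = β ≫ e := by rw [Category.assoc, hqπ]
      have hH : (v ≫ α) ≫ h = β ≫ h := step1 _ _ hE
      calc v ≫ u ≫ a ≫ ω = (v ≫ (u ≫ a)) ≫ ω := by simp only [Category.assoc]
        _ = (v ≫ (α ≫ q)) ≫ ω := by rw [hα]
        _ = (v ≫ α) ≫ q ≫ ω := by simp only [Category.assoc]
        _ = (v ≫ α) ≫ h := by rw [hqω]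
        _ = β ≫ h := hH
        _ = β ≫ q ≫ ω := by rw [hqω]
        _ = (β ≫ q) ≫ ω := by simp only [Category.assoc]
        _ = (v ≫ (u ≫ b)) ≫ ω := by rw [hβ]
        _ = v ≫ u ≫ b ≫ ω := by simp only [Category.assoc]
    have : a ≫ ι = b ≫ ι := by
      apply Limits.prod.hom_ext
      · show (a ≫ ι) ≫ prod.fst = (b ≫ ι) ≫ prod.fst
        simpa only [Category.assoc] using hab
      · show (a ≫ ι) ≫ prod.snd = (b ≫ ι) ≫ prod.snd
        simpa only [Category.assoc] using hω
    exact Mono.right_cancellation _ _ this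
  -- π is iso, giving the amalgamation
  have hπiso : IsIso π := aux_balanced hΩ π hπmono hπepi
  let k : X ⟶ W := inv π ≫ ω
  have hek : e ≫ k = h := by
    rw [← hqπ, ← hqω]
    show (q ≫ π) ≫ inv π ≫ ω = q ≫ ω
    rw [Category.assoc, ← Category.assoc π, IsIso.hom_inv_id, Category.id_comp]
  have hgk : ∀ i, g i ≫ k = x (g i) (hg i) := by
    intro i
    have hgi : Sigma.ι C i ≫ e = g i := Sigma.ι_desc _ _
    have hhi : Sigma.ι C i ≫ h = x (g i) (hg i) := Sigma.ι_desc _ _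
    calc g i ≫ k = (Sigma.ι C i ≫ e) ≫ k := by rw [hgi]
      _ = Sigma.ι C i ≫ e ≫ k := Category.assoc _ _ _
      _ = Sigma.ι C i ≫ h := by rw [hek]
      _ = x (g i) (hg i) := hhi
  refine ⟨k, ?_, ?_⟩
  · -- k is an amalgamation
    intro Y f' hf'
    show f' ≫ k = x f' hf'
    refine hloceq _ _ _ (J.pullback_stable f' hfam) ?_
    rintro Y' u ⟨Y₁, l, m₁, hm₁, hl⟩
    cases hm₁ with
    | mk i =>
      -- hl : l ≫ g i = u ≫ f'
      have hxeq : u ≫ x f' hf' = l ≫ x (g i) (hg i) := by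
        have := hx u l hf' (hg i) hl.symm
        simpa using this
      calc u ≫ f' ≫ k = (u ≫ f') ≫ k := (Category.assoc _ _ _).symm
        _ = (l ≫ g i) ≫ k := by rw [hl]
        _ = l ≫ x (g i) (hg i) := by rw [Category.assoc, hgk i]
        _ = u ≫ x f' hf' := hxeq.symm
  · -- uniqueness
    intro k' hk'
    refine hloceq _ _ _ hS ?_
    intro Y u hu
    have h1 : u ≫ k' = x u hu := hk' u hu
    have h2 : u ≫ k = x u hu := by
      refine hloceq _ _ _ (J.pullback_stable u hfam) ?_
      rintro Y' v ⟨Y₁, l, m₁, hm₁, hl⟩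
      cases hm₁ with
      | mk i =>
        have hxeq : v ≫ x u hu = l ≫ x (g i) (hg i) := by
          have := hx v l hu (hg i) hl.symm
          simpa using this
        calc v ≫ u ≫ k = (l ≫ g i) ≫ k := by rw [← Category.assoc, ← hl]
          _ = l ≫ x (g i) (hg i) := by rw [Category.assoc, hgk i]
          _ = v ≫ x u hu := hxeq.symm
    rw [h1, h2]
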